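/- Let N = N(Q_n, m, r) be an indecomposable quasi Q_n-filiform Lie algebra (N is not a direct sum of two nonzero ideals), and let T = {δ ∈ Der N : δ e_{s0} ∈ ℂ e_{s0} and δ e_{s1} ∈ ℂ e_{s1} for all 1 ≤ s ≤ m}. Then there exist derivations τ_0, τ_1, ..., τ_m ∈ T with τ_0 e_{s0} = 0 and τ_0 e_{s1} = e_{s1} for all s, and for 1 ≤ i ≤ m, τ_i e_{i0} = -2 e_{i0}, τ_i e_{i1} = (n-2) e_{i1}, and τ_i e_{s0} = τ_i e_{s1} = 0 for s ≠ i; moreover {τ_0, τ_1, ..., τ_m} is a basis of T, so dim T = m + 1. -/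

import Mathlib

open Finset

/-- A quasi `Qₙ`-filiform Lie algebra `N = N(Qₙ, m, r)`: a finite-dimensional complex
nilpotent Lie algebra which is the sum of `m` pairwise commuting subalgebras, each
isomorphic to the filiform Lie algebra `Qₙ` with basis `e i 0, …, e i n` satisfying the
`Qₙ` bracket relations, and such that
`{e 1 0, …, e 1 (n-1), …, e m 0, …, e m (n-1), e 1 n, …, e r n}` is a basis of `N`,
where `r = dim c^{n-1} N`. -/
structure QuasiQnFiliform (n m r : ℕ) (N : Type*) [LieRing N] [LieAlgebra ℂ N] : Type _ where
  /-- the distinguished vectors `e_{ij}`, for `1 ≤ i ≤ m`, `0 ≤ j ≤ n` -/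
  e : ℕ → ℕ → N
  /-- `N` is nilpotent -/
  nilpotent : LieRing.IsNilpotent N
  /-- `N` is finite-dimensional -/
  findim : FiniteDimensional ℂ N
  /-- `[e_{i0}, e_{ij}] = e_{i,j+1}` for `1 ≤ j ≤ n - 2` -/
  bracket_e0 : ∀ i j, 1 ≤ i → i ≤ m → 1 ≤ j → j ≤ n - 2 → ⁅e i 0, e i j⁆ = e i (j + 1)
  /-- `[e_{i0}, e_{i,n-1}] = 0` -/
  bracket_e0_top : ∀ i, 1 ≤ i → i ≤ m → ⁅e i 0, e i (n - 1)⁆ = 0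
  /-- `[e_{i0}, e_{in}] = 0` -/
  bracket_e0_n : ∀ i, 1 ≤ i → i ≤ m → ⁅e i 0, e i n⁆ = 0
  /-- `[e_{ij}, e_{i,n-j}] = (-1)^j e_{in}` for `1 ≤ j ≤ n - 1` -/
  bracket_pair : ∀ i j, 1 ≤ i → i ≤ m → 1 ≤ j → j ≤ n - 1 →
    ⁅e i j, e i (n - j)⁆ = ((-1 : ℂ)) ^ j • e i n
  /-- all remaining brackets inside a component vanish -/
  bracket_zero : ∀ i j k, 1 ≤ i → i ≤ m → 1 ≤ j → j ≤ n → 1 ≤ k → k ≤ n → j + k ≠ n →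
    ⁅e i j, e i k⁆ = 0
  /-- distinct components commute: `[N_i, N_{i'}] = 0` -/
  bracket_comm : ∀ i i' j j', 1 ≤ i → i ≤ m → 1 ≤ i' → i' ≤ m → i ≠ i' → j ≤ n → j' ≤ n →
    ⁅e i j, e i' j'⁆ = 0
  /-- `{e_{i0}, …, e_{in}}` is linearly independent (each `Nᵢ ≅ Qₙ` has it as a basis) -/
  indep_comp : ∀ i, 1 ≤ i → i ≤ m → LinearIndependent ℂ (fun j : Fin (n + 1) => e i (j : ℕ))
  /-- the distinguished family is linearly independent … -/
  basis_indep : LinearIndependent ℂ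
    (Sum.elim (fun p : Fin m × Fin n => e ((p.1 : ℕ) + 1) (p.2 : ℕ))
      (fun t : Fin r => e ((t : ℕ) + 1) n))
  /-- … and spans `N`, i.e. it is a basis of `N` (in particular `N = N₁ + ⋯ + N_m`) -/
  basis_span : Submodule.span ℂ (Set.range
    (Sum.elim (fun p : Fin m × Fin n => e ((p.1 : ℕ) + 1) (p.2 : ℕ))
      (fun t : Fin r => e ((t : ℕ) + 1) n))) = ⊤
  /-- `r = dim c^{n-1} N` -/
  rank_lcs : Module.finrank ℂ (LieModule.lowerCentralSeries ℂ N N (n - 1)) = r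

/-- The set `T = {δ ∈ Der N ∣ δ e_{s0} ∈ ℂ e_{s0}, δ e_{s1} ∈ ℂ e_{s1} for all s}`. -/
def torusSet (n m r : ℕ) {N : Type*} [LieRing N] [LieAlgebra ℂ N]
    (Q : QuasiQnFiliform n m r N) : Set (LieDerivation ℂ N N) :=
  {δ | ∀ s, 1 ≤ s → s ≤ m →
    δ (Q.e s 0) ∈ Submodule.span ℂ {Q.e s 0} ∧ δ (Q.e s 1) ∈ Submodule.span ℂ {Q.e s 1}}

/-!
A derivation `δ` with `δ e_{s0} = a_s e_{s0}` and `δ e_{s1} = b_s e_{s1}` is diagonal in the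
distinguished basis: since `e_{s,j+1} = [e_{s0}, e_{sj}]` and `e_{sn} = -[e_{s1}, e_{s,n-1}]`, it
acts on `e_{sj}` by `(j-1) a_s + b_s` for `1 ≤ j < n` and on `e_{sn}` by `μ_s = (n-2) a_s + 2 b_s`;
in particular `δ` is determined by `(a, b)`. The `e_{tn}`, `t ≤ r`, span `c^{n-1} N` (a dimension
count), so each `e_{sn}` is a combination of those `e_{tn}` with `μ_t = μ_s`. Hence, if `μ` were not
constant, splitting the basis according to whether `μ` of its component equals `μ_1` would split
`N` into two ideals. So `μ` is constant and `T` is parametrized by `(a_1, …, a_m, μ) ∈ ℂ^{m+1}`.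
Conversely, for each such choice the diagonal map with these weights is a derivation, because the
weights are additive along the bracket table of `Qₙ`; this produces `τ_0, …, τ_m`.
-/

open Submodule

section LieAlgebra

variable {R L ι : Type*} [CommRing R] [LieRing L] [LieAlgebra R L]

theorem leibniz_of_basis (b : Module.Basis ι R L) (f : L →ₗ[R] L)
    (h : ∀ k l, f ⁅b k, b l⁆ = ⁅b k, f (b l)⁆ - ⁅b l, f (b k)⁆) (x y : L) :
    f ⁅x, y⁆ = ⁅x, f y⁆ - ⁅y, f x⁆ := by
  let ad : L →ₗ[R] L →ₗ[R] L := (LieModule.toEnd R L L : L →ₗ[R] Module.End R L)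
  have hB : ad.compr₂ f = ad.compl₂ f - (ad.compl₂ f).flip :=
    LinearMap.ext_basis b b fun k l => by simpa [ad] using h k l
  simpa [ad] using LinearMap.congr_fun₂ hB x y

theorem LieDerivation.apply_lie_of_apply_eq_smul (D : LieDerivation R L L) {x y : L} {α β : R}
    (hx : D x = α • x) (hy : D y = β • y) : D ⁅x, y⁆ = (α + β) • ⁅x, y⁆ := by
  rw [LieDerivation.apply_lie_eq_add, hx, hy, smul_lie, lie_smul, add_smul, add_comm]

theorem LieDerivation.finset_sum_apply {α : Type*} (s : Finset α) (D : α → LieDerivation R L L)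
    (x : L) : (∑ i ∈ s, D i) x = ∑ i ∈ s, D i x := by
  rw [← LieDerivation.coeFnAddMonoidHom_apply, map_sum, Finset.sum_apply]
  rfl

theorem exists_lieIdeal_coe_eq_span_image (b : Module.Basis ι R L) (S : Set ι)
    (hS : ∀ k, ∀ l ∈ S, ⁅b k, b l⁆ ∈ span R (b '' S)) :
    ∃ I : LieIdeal R L, LieSubmodule.toSubmodule I = span R (b '' S) := by
  have hgen : ∀ k, ∀ y ∈ span R (b '' S), ⁅b k, y⁆ ∈ span R (b '' S) := fun k y hy =>
    (span_le (p := (span R (b '' S)).comap (LieModule.toEnd R L L (b k) : L →ₗ[R] L))).mpr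
      (by rintro _ ⟨l, hl, rfl⟩; exact hS k l hl) hy
  have hlie : ∀ x : L, ∀ y ∈ span R (b '' S), ⁅x, y⁆ ∈ span R (b '' S) := by
    intro x y hy
    have hx : x ∈ span R (Set.range b) := b.span_eq ▸ mem_top
    induction hx using span_induction with
    | mem _ hx => obtain ⟨k, rfl⟩ := hx; exact hgen k y hy
    | zero => simp
    | add u v _ _ hu hv => rw [add_lie]; exact add_mem hu hv
    | smul c u _ hu => rw [smul_lie]; exact smul_mem _ c hu
  exact ⟨{ toSubmodule := span R (b '' S), lie_mem := fun hy => hlie _ _ hy }, rfl⟩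

theorem exists_lieIdeal_decomposition_of_basis [Nontrivial R] (b : Module.Basis ι R L) (S : Set ι)
    (hS : ∀ k, ∀ l ∈ S, ⁅b k, b l⁆ ∈ span R (b '' S))
    (hSc : ∀ k, ∀ l ∈ Sᶜ, ⁅b k, b l⁆ ∈ span R (b '' Sᶜ))
    (hne : S.Nonempty) (hne' : Sᶜ.Nonempty) :
    ∃ I J : LieIdeal R L, I ≠ ⊥ ∧ J ≠ ⊥ ∧ I ⊓ J = ⊥ ∧ I ⊔ J = ⊤ := by
  obtain ⟨I, hI⟩ := exists_lieIdeal_coe_eq_span_image b S hS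
  obtain ⟨J, hJ⟩ := exists_lieIdeal_coe_eq_span_image b Sᶜ hSc
  have hne_bot : ∀ (K : LieIdeal R L) (T : Set ι), LieSubmodule.toSubmodule K = span R (b '' T) →
      T.Nonempty → K ≠ ⊥ := by
    rintro K T hK ⟨k, hk⟩ rfl
    have : b k ∈ span R (b '' T) := subset_span ⟨k, hk, rfl⟩
    rw [← hK] at this
    exact b.ne_zero k this
  refine ⟨I, J, hne_bot I S hI hne, hne_bot J Sᶜ hJ hne', ?_, ?_⟩
  · rw [← LieSubmodule.toSubmodule_inj, LieSubmodule.inf_toSubmodule, hI, hJ,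
      LieSubmodule.bot_toSubmodule, ← disjoint_iff]
    exact b.linearIndependent.disjoint_span_image disjoint_compl_right
  · rw [← LieSubmodule.toSubmodule_inj, LieSubmodule.sup_toSubmodule, hI, hJ,
      LieSubmodule.top_toSubmodule, ← span_union, ← Set.image_union, Set.union_compl_self,
      Set.image_univ, b.span_eq]

end LieAlgebra

theorem mem_span_image_of_apply_eq_smul {K V ι : Type*} [Field K] [AddCommGroup V] [Module K V]
    [Fintype ι] (f : V →ₗ[K] V) {v : ι → V} (hv : LinearIndependent K v) {c : ι → K}
    (hfv : ∀ i, f (v i) = c i • v i) {x : V} {μ : K} (hx : x ∈ span K (Set.range v))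
    (hfx : f x = μ • x) : x ∈ span K (v '' {i | c i = μ}) := by
  obtain ⟨a, rfl⟩ := (mem_span_range_iff_exists_fun K).mp hx
  have hcoef : ∀ i, (c i - μ) * a i = 0 := by
    refine Fintype.linearIndependent_iff.mp hv _ ?_
    have hf : ∑ i, (c i * a i) • v i = ∑ i, (μ * a i) • v i := by
      simpa [map_sum, hfv, Finset.smul_sum, smul_smul, mul_comm] using hfx
    simp only [sub_mul, sub_smul, Finset.sum_sub_distrib, hf, sub_self]
  refine sum_mem fun i _ => ?_
  by_cases hi : c i = μ
  · exact smul_mem _ _ (subset_span ⟨i, hi, rfl⟩)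
  · simp [(mul_eq_zero.mp (hcoef i)).resolve_left (sub_ne_zero.mpr hi)]

namespace QuasiQnFiliform

variable {n m r : ℕ} {N : Type*} [LieRing N] [LieAlgebra ℂ N] (Q : QuasiQnFiliform n m r N)

def component : (Fin m × Fin n) ⊕ Fin r → ℕ :=
  Sum.elim (fun p => p.1 + 1) (fun t => t + 1)

def level : (Fin m × Fin n) ⊕ Fin r → ℕ :=
  Sum.elim (fun p => p.2) (fun _ => n)

theorem one_le_component (k : (Fin m × Fin n) ⊕ Fin r) : 1 ≤ component k := by
  cases k <;> simp [component]

theorem component_le (hrm : r ≤ m) (k : (Fin m × Fin n) ⊕ Fin r) : component k ≤ m := by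
  cases k <;> simp [component]; omega

theorem level_le (k : (Fin m × Fin n) ⊕ Fin r) : level k ≤ n := by
  cases k <;> simp [level]

noncomputable def basis : Module.Basis ((Fin m × Fin n) ⊕ Fin r) ℂ N :=
  Module.Basis.mk Q.basis_indep Q.basis_span.ge

theorem basis_apply (k : (Fin m × Fin n) ⊕ Fin r) : Q.basis k = Q.e (component k) (level k) := by
  rw [basis, Module.Basis.mk_apply]
  cases k <;> rfl

theorem e_eq_basis {s j : ℕ} (hs : 1 ≤ s) (hsm : s ≤ m) (hj : j < n) :
    Q.e s j = Q.basis (.inl (⟨s - 1, by omega⟩, ⟨j, hj⟩)) := by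
  rw [basis_apply, component, level, Sum.elim_inl, Sum.elim_inl, Nat.sub_add_cancel hs]

theorem e_ne_zero {s j : ℕ} (hs : 1 ≤ s) (hsm : s ≤ m) (hj : j ≤ n) : Q.e s j ≠ 0 :=
  (Q.indep_comp s hs hsm).ne_zero ⟨j, Nat.lt_succ_of_le hj⟩

theorem lie_e_zero_e {s j : ℕ} (hs : 1 ≤ s) (hsm : s ≤ m) (hj : j ≤ n) :
    ⁅Q.e s 0, Q.e s j⁆ = 0 ∨ 1 ≤ j ∧ j + 1 < n ∧ ⁅Q.e s 0, Q.e s j⁆ = Q.e s (j + 1) := by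
  rcases Nat.eq_zero_or_pos j with rfl | hj1
  · exact .inl (lie_self _)
  · rcases lt_or_ge (j + 1) n with hjn | hjn
    · exact .inr ⟨hj1, hjn, Q.bracket_e0 s j hs hsm hj1 (by omega)⟩
    · obtain rfl | rfl : j = n - 1 ∨ j = n := by omega
      exacts [.inl (Q.bracket_e0_top s hs hsm), .inl (Q.bracket_e0_n s hs hsm)]

theorem lie_e_e_of_pos {s j j' : ℕ} (hs : 1 ≤ s) (hsm : s ≤ m) (hj : 1 ≤ j) (hjn : j ≤ n)
    (hj' : 1 ≤ j') (hj'n : j' ≤ n) :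
    ⁅Q.e s j, Q.e s j'⁆ = 0 ∨ j + j' = n ∧ ⁅Q.e s j, Q.e s j'⁆ = (-1 : ℂ) ^ j • Q.e s n := by
  by_cases hjj : j + j' = n
  · obtain rfl : j' = n - j := by omega
    exact .inr ⟨hjj, Q.bracket_pair s j hs hsm hj (by omega)⟩
  · exact .inl (Q.bracket_zero s j j' hs hsm hj hjn hj' hj'n hjj)

theorem e_mem_lowerCentralSeries {s j : ℕ} (hs : 1 ≤ s) (hsm : s ≤ m) (hj : 1 ≤ j)
    (hjn : j < n) :
    Q.e s j ∈ LieModule.lowerCentralSeries ℂ N N (j - 1) := by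
  induction j, hj using Nat.le_induction with
  | base => exact LieSubmodule.mem_top _
  | succ j hj ih =>
    rw [← Q.bracket_e0 s j hs hsm hj (by omega), show j + 1 - 1 = j - 1 + 1 by omega,
      LieModule.lowerCentralSeries_succ]
    exact LieSubmodule.lie_mem_lie (LieSubmodule.mem_top _) (ih (by omega))

theorem e_top_mem_lowerCentralSeries (hn : 2 ≤ n) {s : ℕ} (hs : 1 ≤ s) (hsm : s ≤ m) :
    Q.e s n ∈ LieModule.lowerCentralSeries ℂ N N (n - 1) := by
  have h := Q.e_mem_lowerCentralSeries hs hsm (j := n - 1) (by omega) (by omega)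
  have hpair := Q.bracket_pair s 1 hs hsm le_rfl (by omega)
  rw [pow_one, neg_one_smul, eq_neg_iff_add_eq_zero, add_eq_zero_iff_neg_eq] at hpair
  have hidx : LieModule.lowerCentralSeries ℂ N N (n - 1) =
      LieModule.lowerCentralSeries ℂ N N (n - 1 - 1 + 1) := by congr 1; omega
  rw [← hpair, hidx, LieModule.lowerCentralSeries_succ]
  exact neg_mem (LieSubmodule.lie_mem_lie (LieSubmodule.mem_top _) h)

theorem lowerCentralSeries_eq_span (hn : 2 ≤ n) (hrm : r ≤ m) :
    (LieModule.lowerCentralSeries ℂ N N (n - 1)).toSubmodule =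
      span ℂ (Set.range fun t : Fin r => Q.e (t + 1) n) := by
  have := Q.findim
  have hindep : LinearIndependent ℂ fun t : Fin r => Q.e (t + 1) n :=
    Q.basis_indep.comp Sum.inr Sum.inr_injective
  refine (eq_of_le_of_finrank_le ?_ ?_).symm
  · exact span_le.mpr <| Set.range_subset_iff.mpr fun t =>
      Q.e_top_mem_lowerCentralSeries hn (by omega) (by omega)
  · rw [finrank_span_eq_card hindep, Fintype.card_fin]
    exact Q.rank_lcs.le

theorem e_top_mem_span (hn : 2 ≤ n) (hrm : r ≤ m) {s : ℕ} (hs : 1 ≤ s) (hsm : s ≤ m) :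
    Q.e s n ∈ span ℂ (Set.range fun t : Fin r => Q.e (t + 1) n) :=
  Q.lowerCentralSeries_eq_span hn hrm ▸ Q.e_top_mem_lowerCentralSeries hn hs hsm

def weight (n : ℕ) (a b : ℂ) (j : ℕ) : ℂ :=
  if j = 0 then a else if j = n then a * (n - 2) + 2 * b else a * (j - 1) + b

theorem weight_zero (n : ℕ) (a b : ℂ) : weight n a b 0 = a := if_pos rfl

theorem weight_one {n : ℕ} (hn : n ≠ 1) (a b : ℂ) : weight n a b 1 = b := by
  simp [weight, Ne.symm hn]

theorem weight_self {n : ℕ} (hn : n ≠ 0) (a b : ℂ) : weight n a b n = a * (n - 2) + 2 * b := by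
  simp [weight, hn]

theorem weight_succ {n j : ℕ} (hj : 1 ≤ j) (hjn : j + 1 < n) (a b : ℂ) :
    weight n a b (j + 1) = a + weight n a b j := by
  simp only [weight, if_neg (by omega : j + 1 ≠ 0), if_neg (by omega : j + 1 ≠ n),
    if_neg (by omega : j ≠ 0), if_neg (by omega : j ≠ n)]
  push_cast
  ring

theorem weight_add_weight_sub {n j : ℕ} (hj : 1 ≤ j) (hjn : j < n) (a b : ℂ) :
    weight n a b j + weight n a b (n - j) = weight n a b n := by
  simp only [weight, if_neg (by omega : j ≠ 0), if_neg (by omega : j ≠ n),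
    if_neg (by omega : n - j ≠ 0), if_neg (by omega : n - j ≠ n), if_neg (by omega : n ≠ 0),
    ↓reduceIte, Nat.cast_sub hjn.le]
  ring

theorem apply_e_eq_weight (hn : 2 ≤ n) (δ : LieDerivation ℂ N N) {s : ℕ} (hs : 1 ≤ s)
    (hsm : s ≤ m) {a b : ℂ} (ha : δ (Q.e s 0) = a • Q.e s 0) (hb : δ (Q.e s 1) = b • Q.e s 1)
    {j : ℕ} (hj : j ≤ n) : δ (Q.e s j) = weight n a b j • Q.e s j := by
  have hlow : ∀ j, j < n → δ (Q.e s j) = weight n a b j • Q.e s j := by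
    intro j hjn
    induction j with
    | zero => rwa [weight_zero]
    | succ j ih =>
      rcases Nat.eq_zero_or_pos j with rfl | hj1
      · rwa [weight_one (by omega)]
      · rw [← Q.bracket_e0 s j hs hsm hj1 (by omega), weight_succ hj1 hjn]
        exact δ.apply_lie_of_apply_eq_smul ha (ih (by omega))
  rcases hj.lt_or_eq with hj | hj
  · exact hlow j hj
  · rw [hj]
    have h := δ.apply_lie_of_apply_eq_smul hb (hlow (n - 1) (by omega))
    have hw : b + weight n a b (n - 1) = weight n a b n := by
      simpa only [weight_one (n := n) (by omega)] using weight_add_weight_sub (n := n) le_rfl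
        (by omega) a b
    rw [Q.bracket_pair s 1 hs hsm le_rfl (by omega), hw, pow_one, neg_one_smul, map_neg,
      smul_neg, neg_inj] at h
    exact h

noncomputable def diagonalMap (a b : ℕ → ℂ) : N →ₗ[ℂ] N :=
  Q.basis.constr ℂ fun k => weight n (a (component k)) (b (component k)) (level k) • Q.basis k

theorem diagonalMap_basis (a b : ℕ → ℂ) (k : (Fin m × Fin n) ⊕ Fin r) :
    Q.diagonalMap a b (Q.basis k) =
      weight n (a (component k)) (b (component k)) (level k) • Q.basis k :=
  Q.basis.constr_basis ℂ _ k

theorem diagonalMap_e (hn : 2 ≤ n) (hrm : r ≤ m) {a b : ℕ → ℂ} {c : ℂ}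
    (hc : ∀ s, weight n (a s) (b s) n = c) {s j : ℕ} (hs : 1 ≤ s) (hsm : s ≤ m) (hj : j ≤ n) :
    Q.diagonalMap a b (Q.e s j) = weight n (a s) (b s) j • Q.e s j := by
  rcases hj.lt_or_eq with hj | hj
  · rw [Q.e_eq_basis hs hsm hj, diagonalMap_basis]
    simp [component, level, Nat.sub_add_cancel hs]
  · rw [hj, hc, ← Module.End.mem_eigenspace_iff]
    refine span_le.mpr ?_ (Q.e_top_mem_span hn hrm hs hsm)
    rintro _ ⟨t, rfl⟩
    rw [SetLike.mem_coe, Module.End.mem_eigenspace_iff, ← hc (t + 1)]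
    simpa [basis_apply, component, level] using Q.diagonalMap_basis a b (.inr t)

theorem diagonalMap_lie_e (hn : 2 ≤ n) (hrm : r ≤ m) {a b : ℕ → ℂ} {c : ℂ}
    (hc : ∀ s, weight n (a s) (b s) n = c) {s s' j j' : ℕ} (hs : 1 ≤ s) (hsm : s ≤ m)
    (hs' : 1 ≤ s') (hs'm : s' ≤ m) (hj : j ≤ n) (hj' : j' ≤ n) :
    Q.diagonalMap a b ⁅Q.e s j, Q.e s' j'⁆ =
      (weight n (a s) (b s) j + weight n (a s') (b s') j') • ⁅Q.e s j, Q.e s' j'⁆ := by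
  by_cases hss : s = s'
  swap
  · simp [Q.bracket_comm s s' j j' hs hsm hs' hs'm hss hj hj']
  subst hss
  have hzero : ∀ j, j ≤ n → Q.diagonalMap a b ⁅Q.e s 0, Q.e s j⁆ =
      (weight n (a s) (b s) 0 + weight n (a s) (b s) j) • ⁅Q.e s 0, Q.e s j⁆ := by
    intro j hj
    rcases Q.lie_e_zero_e hs hsm hj with h | ⟨hj1, hjn, h⟩
    · simp [h]
    · rw [h, Q.diagonalMap_e hn hrm hc hs hsm hjn.le, weight_succ hj1 hjn, weight_zero]
  rcases Nat.eq_zero_or_pos j with rfl | hj1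
  · exact hzero j' hj'
  rcases Nat.eq_zero_or_pos j' with rfl | hj'1
  · rw [← lie_skew, map_neg, hzero j hj, smul_neg, add_comm]
  rcases Q.lie_e_e_of_pos hs hsm hj1 hj hj'1 hj' with h | ⟨hjj, h⟩
  · simp [h]
  · rw [h, map_smul, Q.diagonalMap_e hn hrm hc hs hsm le_rfl, smul_comm,
      show j' = n - j by omega, weight_add_weight_sub hj1 (by omega)]

noncomputable def diagonal (hn : 2 ≤ n) (hrm : r ≤ m) (a b : ℕ → ℂ) (c : ℂ)
    (hc : ∀ s, weight n (a s) (b s) n = c) : LieDerivation ℂ N N where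
  toLinearMap := Q.diagonalMap a b
  leibniz' := leibniz_of_basis Q.basis _ fun k l => by
    simp only [basis_apply]
    rw [Q.diagonalMap_lie_e hn hrm hc (one_le_component k) (component_le hrm k)
      (one_le_component l) (component_le hrm l) (level_le k) (level_le l),
      Q.diagonalMap_e hn hrm hc (one_le_component k) (component_le hrm k) (level_le k),
      Q.diagonalMap_e hn hrm hc (one_le_component l) (component_le hrm l) (level_le l),
      lie_smul, lie_smul, ← lie_skew (Q.e (component l) _), smul_neg, sub_neg_eq_add, add_smul,
      add_comm]

theorem diagonal_apply_e (hn : 2 ≤ n) (hrm : r ≤ m) {a b : ℕ → ℂ} {c : ℂ}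
    (hc : ∀ s, weight n (a s) (b s) n = c) {s j : ℕ} (hs : 1 ≤ s) (hsm : s ≤ m) (hj : j ≤ n) :
    Q.diagonal hn hrm a b c hc (Q.e s j) = weight n (a s) (b s) j • Q.e s j :=
  Q.diagonalMap_e hn hrm hc hs hsm hj

theorem ext_of_apply_e (hn : 2 ≤ n) (hrm : r ≤ m) {δ δ' : LieDerivation ℂ N N}
    (h : ∀ s, 1 ≤ s → s ≤ m → δ (Q.e s 0) = δ' (Q.e s 0) ∧ δ (Q.e s 1) = δ' (Q.e s 1)) :
    δ = δ' := by
  rw [← sub_eq_zero]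
  have hvanish : ∀ s, 1 ≤ s → s ≤ m → ∀ j, j ≤ n → (δ - δ') (Q.e s j) = 0 := by
    intro s hs hsm j hj
    have h0 : (δ - δ') (Q.e s 0) = (0 : ℂ) • Q.e s 0 := by
      rw [LieDerivation.sub_apply, (h s hs hsm).1, sub_self, zero_smul]
    have h1 : (δ - δ') (Q.e s 1) = (0 : ℂ) • Q.e s 1 := by
      rw [LieDerivation.sub_apply, (h s hs hsm).2, sub_self, zero_smul]
    rw [Q.apply_e_eq_weight hn _ hs hsm h0 h1 hj]
    simp [weight]
  have hlin : ((δ - δ' : LieDerivation ℂ N N) : N →ₗ[ℂ] N) = 0 := Q.basis.ext fun k => by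
    rw [LieDerivation.coeFn_coe, basis_apply, LinearMap.zero_apply]
    exact hvanish _ (one_le_component k) (component_le hrm k) _ (level_le k)
  ext x
  simpa using LinearMap.congr_fun hlin x

theorem e_top_mem_span_basis_of_apply_eq_smul (hn : 2 ≤ n) (hrm : r ≤ m) (f : N →ₗ[ℂ] N)
    (μ : ℕ → ℂ) (hf : ∀ s, 1 ≤ s → s ≤ m → f (Q.e s n) = μ s • Q.e s n) {s : ℕ} (hs : 1 ≤ s)
    (hsm : s ≤ m) : Q.e s n ∈ span ℂ (Q.basis '' {k | μ (component k) = μ s}) := by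
  have h := mem_span_image_of_apply_eq_smul f (Q.basis_indep.comp Sum.inr Sum.inr_injective)
    (c := fun t : Fin r => μ (t + 1)) (fun t => hf _ (by omega) (by omega))
    (Q.e_top_mem_span hn hrm hs hsm) (hf s hs hsm)
  refine span_mono ?_ h
  rintro _ ⟨t, ht, rfl⟩
  exact ⟨.inr t, ht, Q.basis_apply _⟩

theorem lie_basis_mem_span (hrm : r ≤ m) (P : ℕ → Prop)
    (hP : ∀ s, 1 ≤ s → s ≤ m → P s → Q.e s n ∈ span ℂ (Q.basis '' {k | P (component k)}))
    (k l : (Fin m × Fin n) ⊕ Fin r) (hl : P (component l)) :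
    ⁅Q.basis k, Q.basis l⁆ ∈ span ℂ (Q.basis '' {k | P (component k)}) := by
  have hs := one_le_component l
  have hsm := component_le hrm l
  have he : ∀ j, j ≤ n → Q.e (component l) j ∈ span ℂ (Q.basis '' {k | P (component k)}) := by
    intro j hj
    rcases hj.lt_or_eq with hj | hj
    · rw [Q.e_eq_basis hs hsm hj]
      exact subset_span ⟨_, show P (component l - 1 + 1) by rwa [Nat.sub_add_cancel hs], rfl⟩
    · exact hj ▸ hP _ hs hsm hl
  have hzero : ∀ j, j ≤ n →
      ⁅Q.e (component l) 0, Q.e (component l) j⁆ ∈ span ℂ (Q.basis '' {k | P (component k)}) := by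
    intro j hj
    rcases Q.lie_e_zero_e hs hsm hj with h | ⟨-, hjn, h⟩ <;> rw [h]
    exacts [zero_mem _, he _ hjn.le]
  rw [basis_apply, basis_apply]
  by_cases hkl : component k = component l
  swap
  · rw [Q.bracket_comm _ _ _ _ (one_le_component k) (component_le hrm k) hs hsm hkl (level_le k)
      (level_le l)]
    exact zero_mem _
  rw [hkl]
  rcases Nat.eq_zero_or_pos (level k) with hk | hk
  · rw [hk]
    exact hzero _ (level_le l)
  rcases Nat.eq_zero_or_pos (level l) with hl' | hl'
  · rw [hl', ← lie_skew]
    exact neg_mem (hzero _ (level_le k))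
  rcases Q.lie_e_e_of_pos hs hsm hk (level_le k) hl' (level_le l) with h | ⟨-, h⟩ <;> rw [h]
  exacts [zero_mem _, smul_mem _ _ (he n le_rfl)]

theorem exists_lieIdeal_decomposition_of_apply_eq_smul (hn : 2 ≤ n) (hrm : r ≤ m)
    (f : N →ₗ[ℂ] N) (μ : ℕ → ℂ) (hf : ∀ s, 1 ≤ s → s ≤ m → f (Q.e s n) = μ s • Q.e s n)
    {s : ℕ} (hs : 1 ≤ s) (hsm : s ≤ m) (hμ : μ s ≠ μ 1) :
    ∃ I J : LieIdeal ℂ N, I ≠ ⊥ ∧ J ≠ ⊥ ∧ I ⊓ J = ⊥ ∧ I ⊔ J = ⊤ := by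
  have hspan : ∀ t, 1 ≤ t → t ≤ m →
      Q.e t n ∈ span ℂ (Q.basis '' {k | μ (component k) = μ t}) := fun t ht htm =>
    Q.e_top_mem_span_basis_of_apply_eq_smul hn hrm f μ hf ht htm
  refine exists_lieIdeal_decomposition_of_basis Q.basis {k | μ (component k) = μ 1}
    (Q.lie_basis_mem_span hrm (μ · = μ 1) fun t ht htm htP =>
      span_mono (Set.image_mono fun k hk => hk.trans htP) (hspan t ht htm))
    (Q.lie_basis_mem_span hrm (μ · ≠ μ 1) fun t ht htm htP =>
      span_mono (Set.image_mono fun k hk => ne_of_eq_of_ne hk htP) (hspan t ht htm))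
    ⟨.inl (⟨0, by omega⟩, ⟨0, by omega⟩), rfl⟩
    ⟨.inl (⟨s - 1, by omega⟩, ⟨0, by omega⟩), by simpa [component, Nat.sub_add_cancel hs] using hμ⟩

theorem weight_top_eq_of_indecomposable (hn : 2 ≤ n) (hrm : r ≤ m)
    (hind : ¬ ∃ I J : LieIdeal ℂ N, I ≠ ⊥ ∧ J ≠ ⊥ ∧ I ⊓ J = ⊥ ∧ I ⊔ J = ⊤)
    (δ : LieDerivation ℂ N N) {a b : ℕ → ℂ}
    (hab : ∀ s, 1 ≤ s → s ≤ m → δ (Q.e s 0) = a s • Q.e s 0 ∧ δ (Q.e s 1) = b s • Q.e s 1)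
    {s : ℕ} (hs : 1 ≤ s) (hsm : s ≤ m) : weight n (a s) (b s) n = weight n (a 1) (b 1) n :=
  by_contra fun hne => hind <| Q.exists_lieIdeal_decomposition_of_apply_eq_smul hn hrm δ _
    (fun t ht htm => Q.apply_e_eq_weight hn δ ht htm (hab t ht htm).1 (hab t ht htm).2 le_rfl)
    hs hsm hne

def torus : Submodule ℂ (LieDerivation ℂ N N) where
  carrier := torusSet n m r Q
  add_mem' hδ hδ' s hs hsm :=
    ⟨add_mem (hδ s hs hsm).1 (hδ' s hs hsm).1, add_mem (hδ s hs hsm).2 (hδ' s hs hsm).2⟩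
  zero_mem' _ _ _ := ⟨zero_mem _, zero_mem _⟩
  smul_mem' c _ hδ s hs hsm := ⟨smul_mem _ c (hδ s hs hsm).1, smul_mem _ c (hδ s hs hsm).2⟩

theorem exists_apply_eq_smul_of_mem_torus {δ : LieDerivation ℂ N N} (hδ : δ ∈ Q.torus) :
    ∃ a b : ℕ → ℂ, ∀ s, 1 ≤ s → s ≤ m →
      δ (Q.e s 0) = a s • Q.e s 0 ∧ δ (Q.e s 1) = b s • Q.e s 1 := by
  have hline : ∀ s, 1 ≤ s → s ≤ m → ∃ a b : ℂ,
      δ (Q.e s 0) = a • Q.e s 0 ∧ δ (Q.e s 1) = b • Q.e s 1 := fun s hs hsm => by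
    obtain ⟨a, ha⟩ := mem_span_singleton.mp (hδ s hs hsm).1
    obtain ⟨b, hb⟩ := mem_span_singleton.mp (hδ s hs hsm).2
    exact ⟨a, b, ha.symm, hb.symm⟩
  choose! a b hab using hline
  exact ⟨a, b, hab⟩

noncomputable def tau (hn : 2 ≤ n) (hrm : r ≤ m) : ℕ → LieDerivation ℂ N N
  | 0 => Q.diagonal hn hrm (fun _ => 0) (fun _ => 1) 2 fun _ => by
      rw [weight_self (by omega)]; ring
  | i + 1 => Q.diagonal hn hrm (fun s => if s = i + 1 then -2 else 0)
      (fun s => if s = i + 1 then (n : ℂ) - 2 else 0) 0 fun s => by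
        rw [weight_self (by omega)]; split_ifs <;> ring

section Tau

variable (hn : 2 ≤ n) (hrm : r ≤ m)

theorem tau_zero_apply_e_zero {s : ℕ} (hs : 1 ≤ s) (hsm : s ≤ m) :
    Q.tau hn hrm 0 (Q.e s 0) = 0 := by
  rw [tau, Q.diagonal_apply_e hn hrm _ hs hsm (Nat.zero_le n), weight_zero, zero_smul]

theorem tau_zero_apply_e_one {s : ℕ} (hs : 1 ≤ s) (hsm : s ≤ m) :
    Q.tau hn hrm 0 (Q.e s 1) = Q.e s 1 := by
  rw [tau, Q.diagonal_apply_e hn hrm _ hs hsm (by omega), weight_one (by omega), one_smul]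

theorem tau_succ_apply_e_zero (i : ℕ) {s : ℕ} (hs : 1 ≤ s) (hsm : s ≤ m) :
    Q.tau hn hrm (i + 1) (Q.e s 0) = (if s = i + 1 then -2 else 0 : ℂ) • Q.e s 0 := by
  rw [tau, Q.diagonal_apply_e hn hrm _ hs hsm (Nat.zero_le n), weight_zero]

theorem tau_succ_apply_e_one (i : ℕ) {s : ℕ} (hs : 1 ≤ s) (hsm : s ≤ m) :
    Q.tau hn hrm (i + 1) (Q.e s 1) = (if s = i + 1 then (n : ℂ) - 2 else 0) • Q.e s 1 := by
  rw [tau, Q.diagonal_apply_e hn hrm _ hs hsm (by omega), weight_one (by omega)]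

theorem sum_smul_tau_apply_e_zero (g : Fin (m + 1) → ℂ) {s : ℕ} (hs : 1 ≤ s) (hsm : s ≤ m) :
    (∑ i, g i • Q.tau hn hrm i) (Q.e s 0) = (-2 * g ⟨s, by omega⟩) • Q.e s 0 := by
  rw [Fin.sum_univ_succ, LieDerivation.add_apply, LieDerivation.finset_sum_apply,
    Finset.sum_eq_single ⟨s - 1, by omega⟩]
  · rw [LieDerivation.smul_apply, LieDerivation.smul_apply, Fin.val_succ,
      Q.tau_succ_apply_e_zero hn hrm _ hs hsm, Fin.val_zero, Q.tau_zero_apply_e_zero hn hrm hs hsm]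
    simp [Nat.sub_add_cancel hs, smul_smul, mul_comm]
  · intro i _ hi
    rw [LieDerivation.smul_apply, Fin.val_succ, Q.tau_succ_apply_e_zero hn hrm _ hs hsm,
      if_neg fun h => hi (Fin.ext (by simp; omega)), zero_smul, smul_zero]
  · simp

theorem sum_smul_tau_apply_e_one (g : Fin (m + 1) → ℂ) {s : ℕ} (hs : 1 ≤ s) (hsm : s ≤ m) :
    (∑ i, g i • Q.tau hn hrm i) (Q.e s 1) = (g 0 + (n - 2) * g ⟨s, by omega⟩) • Q.e s 1 := by
  rw [Fin.sum_univ_succ, LieDerivation.add_apply, LieDerivation.finset_sum_apply,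
    Finset.sum_eq_single ⟨s - 1, by omega⟩]
  · rw [LieDerivation.smul_apply, LieDerivation.smul_apply, Fin.val_succ,
      Q.tau_succ_apply_e_one hn hrm _ hs hsm, Fin.val_zero, Q.tau_zero_apply_e_one hn hrm hs hsm]
    simp [Nat.sub_add_cancel hs, smul_smul, mul_comm, add_smul]
  · intro i _ hi
    rw [LieDerivation.smul_apply, Fin.val_succ, Q.tau_succ_apply_e_one hn hrm _ hs hsm,
      if_neg fun h => hi (Fin.ext (by simp; omega)), zero_smul, smul_zero]
  · simp

theorem tau_mem_torus (i : ℕ) : Q.tau hn hrm i ∈ Q.torus := by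
  intro s hs hsm
  cases i with
  | zero =>
    rw [Q.tau_zero_apply_e_zero hn hrm hs hsm, Q.tau_zero_apply_e_one hn hrm hs hsm]
    exact ⟨zero_mem _, mem_span_singleton_self _⟩
  | succ i =>
    rw [Q.tau_succ_apply_e_zero hn hrm i hs hsm, Q.tau_succ_apply_e_one hn hrm i hs hsm]
    exact ⟨smul_mem _ _ (mem_span_singleton_self _), smul_mem _ _ (mem_span_singleton_self _)⟩

theorem linearIndependent_tau (hm : 1 ≤ m) :
    LinearIndependent ℂ fun i : Fin (m + 1) => Q.tau hn hrm i := by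
  rw [Fintype.linearIndependent_iff]
  intro g hg
  have hsucc : ∀ s (hs : 1 ≤ s) (hsm : s ≤ m), g ⟨s, by omega⟩ = 0 := by
    intro s hs hsm
    have h := Q.sum_smul_tau_apply_e_zero hn hrm g hs hsm
    rw [hg, LieDerivation.zero_apply, eq_comm, smul_eq_zero] at h
    simpa using h.resolve_right (Q.e_ne_zero hs hsm (Nat.zero_le n))
  have hzero : g 0 = 0 := by
    have h := Q.sum_smul_tau_apply_e_one hn hrm g le_rfl hm
    rw [hg, LieDerivation.zero_apply, eq_comm, smul_eq_zero, hsucc 1 le_rfl hm] at h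
    simpa using h.resolve_right (Q.e_ne_zero le_rfl hm (by omega))
  rintro ⟨_ | s, hs⟩
  exacts [hzero, hsucc (s + 1) (by omega) (by omega)]

theorem torus_le_span_tau (hind : ¬ ∃ I J : LieIdeal ℂ N, I ≠ ⊥ ∧ J ≠ ⊥ ∧ I ⊓ J = ⊥ ∧ I ⊔ J = ⊤) :
    Q.torus ≤ span ℂ (Set.range fun i : Fin (m + 1) => Q.tau hn hrm i) := by
  intro δ hδ
  obtain ⟨a, b, hab⟩ := Q.exists_apply_eq_smul_of_mem_torus hδ
  -- `-2 g_s = a_s` and `g_0 + (n - 2) g_s = b_s` are solvable for all `s` at once because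
  -- `μ_s = (n - 2) a_s + 2 b_s` does not depend on `s`.
  let g : Fin (m + 1) → ℂ := fun i => if (i : ℕ) = 0 then weight n (a 1) (b 1) n / 2 else -a i / 2
  have hδg : δ = ∑ i, g i • Q.tau hn hrm i := by
    refine Q.ext_of_apply_e hn hrm fun s hs hsm => ⟨?_, ?_⟩
    · rw [Q.sum_smul_tau_apply_e_zero hn hrm g hs hsm, (hab s hs hsm).1]
      simp only [g, if_neg (show s ≠ 0 by omega)]
      congr 1
      ring
    · have hμ := Q.weight_top_eq_of_indecomposable hn hrm hind δ hab hs hsm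
      rw [Q.sum_smul_tau_apply_e_one hn hrm g hs hsm, (hab s hs hsm).2]
      simp only [g, Fin.val_zero, if_neg (show s ≠ 0 by omega), if_pos, ← hμ,
        weight_self (show n ≠ 0 by omega)]
      congr 1
      ring
  rw [hδg]
  exact sum_mem fun i _ => smul_mem _ _ (subset_span ⟨i, rfl⟩)

theorem span_tau_eq_torus
    (hind : ¬ ∃ I J : LieIdeal ℂ N, I ≠ ⊥ ∧ J ≠ ⊥ ∧ I ⊓ J = ⊥ ∧ I ⊔ J = ⊤) :
    span ℂ (Set.range fun i : Fin (m + 1) => Q.tau hn hrm i) = Q.torus :=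
  le_antisymm (span_le.mpr (Set.range_subset_iff.mpr fun i => Q.tau_mem_torus hn hrm i))
    (Q.torus_le_span_tau hn hrm hind)

end Tau

end QuasiQnFiliform

theorem torus_basis_general
    (n d m r : ℕ) (hn : n = 2 * d + 1) (hd : 2 ≤ d)
    (hm : 1 ≤ m) (hrm : r ≤ m)
    (N : Type*) [LieRing N] [LieAlgebra ℂ N] (Q : QuasiQnFiliform n m r N)
    (hind : ¬ ∃ I J : LieIdeal ℂ N, I ≠ ⊥ ∧ J ≠ ⊥ ∧ I ⊓ J = ⊥ ∧ I ⊔ J = ⊤) :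
    ∃ Tsub : Submodule ℂ (LieDerivation ℂ N N),
      (Tsub : Set (LieDerivation ℂ N N)) = torusSet n m r Q ∧
      ∃ τ : ℕ → LieDerivation ℂ N N,
        (∀ i, i ≤ m → τ i ∈ Tsub) ∧
        (∀ s, 1 ≤ s → s ≤ m → τ 0 (Q.e s 0) = 0 ∧ τ 0 (Q.e s 1) = Q.e s 1) ∧
        (∀ i, 1 ≤ i → i ≤ m →
          τ i (Q.e i 0) = (-2 : ℂ) • Q.e i 0 ∧
          τ i (Q.e i 1) = (((n - 2 : ℕ) : ℂ)) • Q.e i 1 ∧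
          ∀ s, 1 ≤ s → s ≤ m → s ≠ i → τ i (Q.e s 0) = 0 ∧ τ i (Q.e s 1) = 0) ∧
        (∃ bT : Module.Basis (Fin (m + 1)) ℂ Tsub, ∀ i : Fin (m + 1),
          (bT i : LieDerivation ℂ N N) = τ (i : ℕ)) ∧
        Module.finrank ℂ Tsub = m + 1 := by
  have hn2 : 2 ≤ n := by omega
  have hli := Q.linearIndependent_tau hn2 hrm hm
  refine ⟨span ℂ (Set.range fun i : Fin (m + 1) => Q.tau hn2 hrm i),
    by rw [Q.span_tau_eq_torus hn2 hrm hind]; rfl, Q.tau hn2 hrm,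
    fun i hi => subset_span ⟨⟨i, by omega⟩, rfl⟩,
    fun s hs hsm => ⟨Q.tau_zero_apply_e_zero hn2 hrm hs hsm, Q.tau_zero_apply_e_one hn2 hrm hs hsm⟩,
    fun i hi him => ?_,
    ⟨Module.Basis.span hli, fun i => congrArg Subtype.val (Module.Basis.span_apply hli i)⟩,
    by rw [finrank_span_eq_card hli, Fintype.card_fin]⟩
  obtain ⟨i, rfl⟩ : ∃ k, i = k + 1 := ⟨i - 1, by omega⟩
  refine ⟨?_, ?_, fun s hs hsm hsi => ?_⟩
  · rw [Q.tau_succ_apply_e_zero hn2 hrm i hi him, if_pos rfl]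
  · rw [Q.tau_succ_apply_e_one hn2 hrm i hi him, if_pos rfl, Nat.cast_sub hn2, Nat.cast_ofNat]
  · rw [Q.tau_succ_apply_e_zero hn2 hrm i hs hsm, Q.tau_succ_apply_e_one hn2 hrm i hs hsm,
      if_neg hsi, if_neg hsi, zero_smul, zero_smul]
    exact ⟨rfl, rfl⟩

/-- **Lemma 2.2.** If `N = N(Qₙ, m, r)` is indecomposable, then `T` is an `(m+1)`-dimensional
subspace of `Der N`, with basis `τ₀, τ₁, …, τ_m` where `τ₀ e_{s0} = 0`, `τ₀ e_{s1} = e_{s1}`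
for all `s`, and for `1 ≤ i ≤ m`, `τᵢ e_{i0} = -2 e_{i0}`, `τᵢ e_{i1} = (n-2) e_{i1}` and
`τᵢ e_{s0} = τᵢ e_{s1} = 0` for `s ≠ i`. -/
theorem torus_basis
    (n d m r : ℕ) (hn : n = 2 * d + 1) (hd : 2 ≤ d)
    (hm : 1 ≤ m) (hr : 1 ≤ r) (hrm : r ≤ m)
    (N : Type*) [LieRing N] [LieAlgebra ℂ N] (Q : QuasiQnFiliform n m r N)
    (hind : ¬ ∃ I J : LieIdeal ℂ N, I ≠ ⊥ ∧ J ≠ ⊥ ∧ I ⊓ J = ⊥ ∧ I ⊔ J = ⊤) :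
    ∃ Tsub : Submodule ℂ (LieDerivation ℂ N N),
      (Tsub : Set (LieDerivation ℂ N N)) = torusSet n m r Q ∧
      ∃ τ : ℕ → LieDerivation ℂ N N,
        (∀ i, i ≤ m → τ i ∈ Tsub) ∧
        (∀ s, 1 ≤ s → s ≤ m → τ 0 (Q.e s 0) = 0 ∧ τ 0 (Q.e s 1) = Q.e s 1) ∧
        (∀ i, 1 ≤ i → i ≤ m →
          τ i (Q.e i 0) = (-2 : ℂ) • Q.e i 0 ∧
          τ i (Q.e i 1) = (((n - 2 : ℕ) : ℂ)) • Q.e i 1 ∧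
          ∀ s, 1 ≤ s → s ≤ m → s ≠ i → τ i (Q.e s 0) = 0 ∧ τ i (Q.e s 1) = 0) ∧
        (∃ bT : Module.Basis (Fin (m + 1)) ℂ Tsub, ∀ i : Fin (m + 1),
          (bT i : LieDerivation ℂ N N) = τ (i : ℕ)) ∧
        Module.finrank ℂ Tsub = m + 1 :=
  torus_basis_general n d m r hn hd hm hrm N Q hind
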